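/- arXiv:2203.10331 — 3 statements merged into one kernel-verified Lean document; each statement's English description precedes it below -/
import Mathlib

section
/- Let $A$ be a finite abelian group, $\mathbb{k}$ a field, and $(\omega, \beta)$ an abelian 3-cocycle on $A$ with coefficients in $\mathbb{k}^\times$, meaning $\omega$ is a 3-cocycle and the two hexagon identities $\omega(b,c,a)\beta(a,b+c)\omega(a,b,c) = \beta(a,c)\omega(b,a,c)\beta(a,b)$ and $\omega(c,a,b)^{-1}\beta(a+b,c)\omega(a,b,c)^{-1} = \beta(a,c)\omega(a,c,b)^{-1}\beta(b,c)$ hold for all $a,b,c \in A$. Then the function $q : A \to \mathbb{k}^\times$, $q(a) = \beta(a,a)$, is a quadratic form: $q(-a) = q(a)$ for all $a$, and $b(x,y) := q(x+y)q(x)^{-1}q(y)^{-1}$ is bilinear. -/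
/-- The trace q(a) = β(a,a) of an abelian 3-cocycle (ω, β) is a quadratic form. -/
theorem abelian_three_cocycle_trace_quadratic {k : Type*} [Field k]
    {A : Type*} [AddCommGroup A] [Fintype A]
    (ω : A → A → A → kˣ) (β : A → A → kˣ)
    (hω : ∀ a b c d : A,
      ω b c d * (ω (a + b) c d)⁻¹ * ω a (b + c) d * (ω a b (c + d))⁻¹ * ω a b c = 1)
    (hex1 : ∀ a b c : A,
      ω b c a * β a (b + c) * ω a b c = β a c * ω b a c * β a b)
    (hex2 : ∀ a b c : A,
      (ω c a b)⁻¹ * β (a + b) c * (ω a b c)⁻¹ = β a c * (ω a c b)⁻¹ * β b c) :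
    (∀ a : A, β (-a) (-a) = β a a) ∧
    (∀ x y z : A, β (x + y + z) (x + y + z) / (β (x + y) (x + y) * β z z) =
      (β (x + z) (x + z) / (β x x * β z z)) *
        (β (y + z) (y + z) / (β y y * β z z))) ∧
    (∀ x y z : A, β (x + y + z) (x + y + z) / (β x x * β (y + z) (y + z)) =
      (β (x + y) (x + y) / (β x x * β y y)) *
        (β (x + z) (x + z) / (β x x * β z z))) := by
  have hω' : ∀ a b c d : A, (ω b c d : k) * ω a (b+c) d * ω a b c
      = (ω (a+b) c d : k) * ω a b (c+d) := by
    intro a b c d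
    have h := congrArg Units.val (hω a b c d)
    push_cast [Units.val_inv_eq_inv_val] at h
    field_simp at h
    exact h
  have e1 : ∀ a b c : A, (β a (b+c) : k) * ω b c a * ω a b c
      = (β a b : k) * β a c * ω b a c := by
    intro a b c
    have h := congrArg Units.val (hex1 a b c)
    push_cast [Units.val_inv_eq_inv_val] at h
    linear_combination h
  have e2 : ∀ a b c : A, (β (a+b) c : k) * ω a c b
      = (β a c : k) * β b c * ω c a b * ω a b c := by
    intro a b c
    have h := congrArg Units.val (hex2 a b c)
    push_cast [Units.val_inv_eq_inv_val] at h
    field_simp at h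
    linear_combination h
  -- key : q(x+y) = q x * q y * (β x y * β y x)
  have bq : ∀ x y : A, (β (x+y) (x+y) : k)
      = (β x x : k) * β y y * ((β x y : k) * β y x) := by
    intro x y
    have h2 := e2 x y (x+y)
    have h1a' : (β x (x+y) : k) * ω x y x = (β x x : k) * β x y := by
      have h := e1 x x y
      have : ((β x (x+y) : k) * ω x y x) * ω x x y
          = ((β x x : k) * β x y) * ω x x y := by linear_combination h
      exact mul_right_cancel₀ (ω x x y).ne_zero this
    have h1b' : (β y (x+y) : k) * ω y x y = (β y x : k) * β y y := by
      have h := e1 y x y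
      have : ((β y (x+y) : k) * ω y x y) * ω x y y
          = ((β y x : k) * β y y) * ω x y y := by linear_combination h
      exact mul_right_cancel₀ (ω x y y).ne_zero this
    have hc := hω' x y x y
    rw [show y + x = x + y from add_comm y x] at hc
    have hQ : (β (x+y) (x+y) : k) * ω x (x+y) y
        = ((β x x : k) * β y y * ((β x y : k) * β y x)) * ω x (x+y) y := by
      linear_combination h2 - (β x (x+y) : k) * (β y (x+y)) * hc
        + (ω x (x+y) y : k) * (β y (x+y)) * (ω y x y) * h1a'
        + (ω x (x+y) y : k) * (β x x) * (β x y) * h1b'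
    exact mul_right_cancel₀ (ω x (x+y) y).ne_zero hQ
  -- additivity of s(a,b) = β a b * β b a in each slot
  have sRk : ∀ a b c : A, (β a (b+c) : k) * β (b+c) a
      = ((β a b : k) * β b a) * ((β a c : k) * β c a) := by
    intro a b c
    have h1 := e1 a b c
    have h2 := e2 b c a
    have h : ((β a (b+c) : k) * β (b+c) a) * ((ω b c a : k) * ω a b c * ω b a c)
        = (((β a b : k) * β b a) * ((β a c : k) * β c a))
            * ((ω b c a : k) * ω a b c * ω b a c) := by
      linear_combination ((β (b+c) a : k) * ω b a c) * h1
        + ((β a b : k) * β a c * ω b a c) * h2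
    exact mul_right_cancel₀ (mul_ne_zero (mul_ne_zero (ω b c a).ne_zero (ω a b c).ne_zero) (ω b a c).ne_zero) h
  have sLk : ∀ a b c : A, (β (a+b) c : k) * β c (a+b)
      = ((β a c : k) * β c a) * ((β b c : k) * β c b) := by
    intro a b c
    have h2 := e2 a b c
    have h1 := e1 c a b
    have h : ((β (a+b) c : k) * β c (a+b)) * ((ω a c b : k) * ω a b c * ω c a b)
        = (((β a c : k) * β c a) * ((β b c : k) * β c b))
            * ((ω a c b : k) * ω a b c * ω c a b) := by
      linear_combination ((β c (a+b) : k) * ω a b c * ω c a b) * h2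
        + ((β a c : k) * β b c * ω c a b * ω a b c) * h1
    exact mul_right_cancel₀ (mul_ne_zero (mul_ne_zero (ω a c b).ne_zero
      (ω a b c).ne_zero) (ω c a b).ne_zero) h
  -- s(a, 0) = 1
  have s0 : ∀ a : A, (β a 0 : k) * β 0 a = 1 := by
    intro a
    have h := sRk a 0 0
    rw [add_zero] at h
    have hne : (β a 0 : k) * β 0 a ≠ 0 := mul_ne_zero (β a 0).ne_zero (β 0 a).ne_zero
    have h' : ((β a 0 : k) * β 0 a) * ((β a 0 : k) * β 0 a)
        = ((β a 0 : k) * β 0 a) * 1 := by linear_combination -h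
    exact mul_left_cancel₀ hne h'
  -- q 0 = 1
  have q0 : (β (0 : A) 0 : k) = 1 := by
    have h := bq (0 : A) 0
    rw [add_zero] at h
    rw [s0 0, mul_one] at h
    exact h
  refine ⟨?_, ?_, ?_⟩
  · -- q(-a) = q(a)
    intro a
    refine Units.ext ?_
    have h1 := bq a (-a)
    rw [add_neg_cancel, q0] at h1
    have h2 := sRk a a (-a)
    rw [add_neg_cancel, s0 a] at h2
    -- h1 : 1 = q a * q (-a) * s(a,-a) ; h2 : 1 = (q a * q a) * s(a,-a)
    have hs : ((β a a : k) * ((β a (-a) : k) * β (-a) a)) * (β (-a) (-a) : k)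
        = ((β a a : k) * ((β a (-a) : k) * β (-a) a)) * (β a a : k) := by
      linear_combination h2 - h1
    exact mul_left_cancel₀ (mul_ne_zero (β a a).ne_zero
      (mul_ne_zero (β a (-a)).ne_zero (β (-a) a).ne_zero)) hs
  · intro x y z
    rw [div_mul_div_comm, div_eq_div_iff_mul_eq_mul]
    refine Units.ext ?_
    push_cast
    rw [bq (x+y) z, sLk x y z, bq x y, bq x z, bq y z]
    ring
  · intro x y z
    rw [show x + y + z = x + (y + z) from add_assoc x y z,
      div_mul_div_comm, div_eq_div_iff_mul_eq_mul]
    refine Units.ext ?_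
    push_cast
    rw [bq x (y+z), sRk x y z, bq y z, bq x y, bq x z]
    ring
end

section
/- Let $A$ be a finite abelian group, $\omega$ a normalized 3-cocycle on $A$ with coefficients in $\mathbb{k}^\times$ that is trivial (identically 1) on a subgroup $E + F$ containing subgroups $E$ and $F$, and $\beta : A \times A \to \mathbb{k}^\times$ part of an abelian 3-cocycle $(\omega,\beta)$. Let $\phi$ be a 2-cocycle on $E$ and $\psi$ a 2-cocycle on $F$, and define $\chi$ on $E \oplus F$ by $\chi((e_1,f_1),(e_2,f_2)) = \beta(f_1,e_2)\,\phi(e_1,e_2)\,\psi(f_1,f_2)$ (all $\omega$-factors being trivial). Then $\chi$ is a 2-cocycle on $E \oplus F$ and $\mathrm{Alt}(\chi)((e_1,f_1),(e_2,f_2)) = \mathrm{Alt}(\phi)(e_1,e_2)\,\mathrm{Alt}(\psi)(f_1,f_2)\,\beta(f_1,e_2)\,\beta(f_2,e_1)^{-1}$, where $\mathrm{Alt}(\chi)(x,y) := \chi(x,y)/\chi(y,x)$; moreover $\mathrm{Alt}(\chi)$ is a skew-symmetric bilinear form on $E \oplus F$. -/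
/-!
Since ω vanishes on E + F, the two hexagon identities say exactly that β is bimultiplicative
there. Hence χ is the product of the pullbacks of φ and ψ along the projections with the
bimultiplicative form ((e₁,f₁),(e₂,f₂)) ↦ β(f₁,e₂), and each factor is a 2-cocycle. The
alternation of any 2-cocycle on an abelian group is bimultiplicative, and for χ it is computed
factor by factor.
-/

section TwoCocycle

variable {G G' M : Type*} [AddCommMonoid G] [AddCommMonoid G'] [CommGroup M]

def IsTwoCocycle (f : G → G → M) : Prop :=
  ∀ x y z : G, f y z * (f (x + y) z)⁻¹ * f x (y + z) * (f x y)⁻¹ = 1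

theorem isTwoCocycle_of_map_add {B : G → G → M}
    (hl : ∀ x y z, B (x + y) z = B x z * B y z) (hr : ∀ x y z, B x (y + z) = B x y * B x z) :
    IsTwoCocycle B := by
  intro x y z
  rw [hl, hr, mul_inv_rev, mul_inv_cancel_left, mul_comm (B x y), inv_mul_cancel_left,
    mul_inv_cancel]

namespace IsTwoCocycle

variable {f g : G → G → M}

theorem mul (hf : IsTwoCocycle f) (hg : IsTwoCocycle g) :
    IsTwoCocycle (fun x y => f x y * g x y) := by
  intro x y z
  calc _ = (f y z * (f (x + y) z)⁻¹ * f x (y + z) * (f x y)⁻¹) *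
        (g y z * (g (x + y) z)⁻¹ * g x (y + z) * (g x y)⁻¹) := by
          simp only [mul_inv]; ac_rfl
    _ = 1 := by rw [hf, hg, one_mul]

theorem comp (hf : IsTwoCocycle f) (π : G' →+ G) : IsTwoCocycle (fun x y => f (π x) (π y)) := by
  intro x y z
  simpa only [map_add] using hf (π x) (π y) (π z)

theorem mul_eq (hf : IsTwoCocycle f) (x y z : G) :
    f (x + y) z * f x y = f y z * f x (y + z) := by
  have h := hf x y z
  apply_fun Additive.ofMul at h ⊢
  simp only [ofMul_mul, ofMul_inv, ofMul_one] at *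
  linear_combination (norm := abel) -h

theorem alt_add_left (hf : IsTwoCocycle f) (x y z : G) :
    f (x + y) z / f z (x + y) = f x z / f z x * (f y z / f z y) := by
  have h₁ := hf.mul_eq x y z
  have h₂ := hf.mul_eq x z y
  have h₃ := hf.mul_eq z x y
  rw [add_comm z y] at h₂
  rw [add_comm z x] at h₃
  apply_fun Additive.ofMul at h₁ h₂ h₃ ⊢
  simp only [ofMul_mul, ofMul_div] at *
  linear_combination (norm := abel) h₁ - h₂ + h₃

theorem alt_add_right (hf : IsTwoCocycle f) (x y z : G) :
    f x (y + z) / f (y + z) x = f x y / f y x * (f x z / f z x) := by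
  have h₁ := hf.mul_eq x y z
  have h₂ := hf.mul_eq y z x
  have h₃ := hf.mul_eq y x z
  rw [add_comm z x] at h₂
  rw [add_comm y x] at h₃
  apply_fun Additive.ofMul at h₁ h₂ h₃ ⊢
  simp only [ofMul_mul, ofMul_div] at *
  linear_combination (norm := abel) -h₁ - h₂ + h₃

end IsTwoCocycle

end TwoCocycle

section Hexagon

variable {A M : Type*} [AddCommGroup A] [CommGroup M] {ω : A → A → A → M} {β : A → A → M}
  {H : AddSubgroup A} {a b c : A}

theorem map_add_right_of_hexagon
    (hex1 : ∀ a b c : A, ω b c a * β a (b + c) * ω a b c = β a c * ω b a c * β a b)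
    (htriv : ∀ a b c : A, a ∈ H → b ∈ H → c ∈ H → ω a b c = 1)
    (ha : a ∈ H) (hb : b ∈ H) (hc : c ∈ H) : β a (b + c) = β a b * β a c := by
  simpa [htriv _ _ _ ha hb hc, htriv _ _ _ hb hc ha, htriv _ _ _ hb ha hc, mul_comm]
    using hex1 a b c

theorem map_add_left_of_hexagon
    (hex2 : ∀ a b c : A, (ω c a b)⁻¹ * β (a + b) c * (ω a b c)⁻¹ = β a c * (ω a c b)⁻¹ * β b c)
    (htriv : ∀ a b c : A, a ∈ H → b ∈ H → c ∈ H → ω a b c = 1)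
    (ha : a ∈ H) (hb : b ∈ H) (hc : c ∈ H) : β (a + b) c = β a c * β b c := by
  simpa [htriv _ _ _ ha hb hc, htriv _ _ _ hc ha hb, htriv _ _ _ ha hc hb] using hex2 a b c

end Hexagon

theorem chi_two_cocycle_and_alt_general {k : Type*} [Field k]
    {A : Type*} [AddCommGroup A] (E F : AddSubgroup A)
    (ω : A → A → A → kˣ) (β : A → A → kˣ)
    (hex1 : ∀ a b c : A,
      ω b c a * β a (b + c) * ω a b c = β a c * ω b a c * β a b)
    (hex2 : ∀ a b c : A,
      (ω c a b)⁻¹ * β (a + b) c * (ω a b c)⁻¹ = β a c * (ω a c b)⁻¹ * β b c)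
    (htriv : ∀ a b c : A, a ∈ E ⊔ F → b ∈ E ⊔ F → c ∈ E ⊔ F → ω a b c = 1)
    (φ : E → E → kˣ) (ψ : F → F → kˣ)
    (hφ : ∀ x y z : E, φ y z * (φ (x + y) z)⁻¹ * φ x (y + z) * (φ x y)⁻¹ = 1)
    (hψ : ∀ x y z : F, ψ y z * (ψ (x + y) z)⁻¹ * ψ x (y + z) * (ψ x y)⁻¹ = 1) :
    ∀ χ : E × F → E × F → kˣ,
      χ = (fun x y => β (x.2 : A) (y.1 : A) * φ x.1 y.1 * ψ x.2 y.2) →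
      (∀ x y z : E × F,
        χ y z * (χ (x + y) z)⁻¹ * χ x (y + z) * (χ x y)⁻¹ = 1) ∧
      (∀ x y : E × F, χ x y / χ y x =
        (φ x.1 y.1 / φ y.1 x.1) * (ψ x.2 y.2 / ψ y.2 x.2) *
          (β (x.2 : A) (y.1 : A) * (β (y.2 : A) (x.1 : A))⁻¹)) ∧
      (∀ x y z : E × F, χ (x + y) z / χ z (x + y) =
        (χ x z / χ z x) * (χ y z / χ z y)) ∧
      (∀ x y z : E × F, χ x (y + z) / χ (y + z) x =
        (χ x y / χ y x) * (χ x z / χ z x)) ∧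
      (∀ x : E × F, χ x x / χ x x = 1) := by
  intro χ hχ_def
  have memE (e : E) : (e : A) ∈ E ⊔ F := AddSubgroup.mem_sup_left e.2
  have memF (f : F) : (f : A) ∈ E ⊔ F := AddSubgroup.mem_sup_right f.2
  have hB : IsTwoCocycle (fun x y : E × F => β (x.2 : A) (y.1 : A)) :=
    isTwoCocycle_of_map_add
      (fun x y z => map_add_left_of_hexagon hex2 htriv (memF x.2) (memF y.2) (memE z.1))
      (fun x y z => map_add_right_of_hexagon hex1 htriv (memF x.2) (memE y.1) (memE z.1))
  have hχ : IsTwoCocycle χ := hχ_def ▸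
    (hB.mul (IsTwoCocycle.comp hφ (AddMonoidHom.fst E F))).mul
      (IsTwoCocycle.comp hψ (AddMonoidHom.snd E F))
  refine ⟨hχ, fun x y => ?_, hχ.alt_add_left, hχ.alt_add_right, fun x => div_self' _⟩
  simp only [hχ_def, mul_div_mul_comm, ← div_eq_mul_inv]
  ac_rfl

/-- When the 3-cocycle ω is trivial on E + F, the 2-cochain
χ((e₁,f₁),(e₂,f₂)) = β(f₁,e₂) φ(e₁,e₂) ψ(f₁,f₂) is a 2-cocycle on E ⊕ F whose
alternation is the skew-symmetric bilinear form
Alt(φ) ⬝ Alt(ψ) ⬝ β(f₁,e₂)/β(f₂,e₁). -/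
theorem chi_two_cocycle_and_alt {k : Type*} [Field k]
    {A : Type*} [AddCommGroup A] [Fintype A] (E F : AddSubgroup A)
    (ω : A → A → A → kˣ) (β : A → A → kˣ)
    (hω : ∀ a b c d : A,
      ω b c d * (ω (a + b) c d)⁻¹ * ω a (b + c) d * (ω a b (c + d))⁻¹ * ω a b c = 1)
    (hex1 : ∀ a b c : A,
      ω b c a * β a (b + c) * ω a b c = β a c * ω b a c * β a b)
    (hex2 : ∀ a b c : A,
      (ω c a b)⁻¹ * β (a + b) c * (ω a b c)⁻¹ = β a c * (ω a c b)⁻¹ * β b c)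
    (htriv : ∀ a b c : A, a ∈ E ⊔ F → b ∈ E ⊔ F → c ∈ E ⊔ F → ω a b c = 1)
    (φ : E → E → kˣ) (ψ : F → F → kˣ)
    (hφ : ∀ x y z : E, φ y z * (φ (x + y) z)⁻¹ * φ x (y + z) * (φ x y)⁻¹ = 1)
    (hψ : ∀ x y z : F, ψ y z * (ψ (x + y) z)⁻¹ * ψ x (y + z) * (ψ x y)⁻¹ = 1) :
    ∀ χ : E × F → E × F → kˣ,
      χ = (fun x y => β (x.2 : A) (y.1 : A) * φ x.1 y.1 * ψ x.2 y.2) →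
      (∀ x y z : E × F,
        χ y z * (χ (x + y) z)⁻¹ * χ x (y + z) * (χ x y)⁻¹ = 1) ∧
      (∀ x y : E × F, χ x y / χ y x =
        (φ x.1 y.1 / φ y.1 x.1) * (ψ x.2 y.2 / ψ y.2 x.2) *
          (β (x.2 : A) (y.1 : A) * (β (y.2 : A) (x.1 : A))⁻¹)) ∧
      (∀ x y z : E × F, χ (x + y) z / χ z (x + y) =
        (χ x z / χ z x) * (χ y z / χ z y)) ∧
      (∀ x y z : E × F, χ x (y + z) / χ (y + z) x =
        (χ x y / χ y x) * (χ x z / χ z x)) ∧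
      (∀ x : E × F, χ x x / χ x x = 1) :=
  chi_two_cocycle_and_alt_general E F ω β hex1 hex2 htriv φ ψ hφ hψ
end

section
/- Let $p$ be an odd prime and $k \in \mathbb{F}_p$ such that $-k$ is not a quadratic residue modulo $p$. Then there exists $n \in \mathbb{F}_p$ such that the image of the matrix $M_n = \begin{pmatrix} n & -k \\ 1 & n \end{pmatrix}$ in $PGL(2, \mathbb{F}_p)$ has order exactly $p + 1$. -/
/-!
Let `K = 𝔽_p(√-κ) = 𝔽_p[X]/(X² + κ)`, a field with `p²` elements. Its unit group is cyclic, so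
`Kˣ/𝔽_pˣ` is cyclic of order `(p² - 1)/(p - 1) = p + 1`. Multiplication on `K` in the basis
`1, √-κ` sends `n + √-κ` to `M_n`; this embeds `K` into `Mat₂(𝔽_p)`, and the units of `K` that land
in the scalar matrices (the centre of `GL₂`) are exactly `𝔽_pˣ`, so `Kˣ/𝔽_pˣ` embeds into
`PGL₂(𝔽_p)`. Finally, every nontrivial class of `Kˣ/𝔽_pˣ`, in particular a generator, contains an
element `n + √-κ`.
-/

open Polynomial

theorem QuotientGroup.orderOf_mk_eq_of_comap_eq {G H : Type*} [Group G] [Group H] (f : G →* H)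
    {N : Subgroup H} [N.Normal] {S : Subgroup G} [S.Normal] (hS : N.comap f = S) (g : G) :
    orderOf (f g : H ⧸ N) = orderOf (g : G ⧸ S) := by
  subst hS
  refine orderOf_eq_orderOf_iff.2 fun m => ?_
  rw [← QuotientGroup.mk_pow, ← QuotientGroup.mk_pow, QuotientGroup.eq_one_iff,
    QuotientGroup.eq_one_iff, ← map_pow, Subgroup.mem_comap]

/-- Unlike `AdjoinRoot.liftAlgHom`, this allows a noncommutative target such as a matrix algebra. -/
noncomputable def AdjoinRoot.liftOfAeval {R A : Type*} [CommRing R] [Ring A] [Algebra R A]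
    (f : R[X]) (x : A) (hx : aeval x f = 0) : AdjoinRoot f →ₐ[R] A :=
  Ideal.Quotient.liftₐ _ (aeval x) fun g hg => by
    obtain ⟨c, rfl⟩ := Ideal.mem_span_singleton'.1 hg
    simp [hx]

theorem AdjoinRoot.liftOfAeval_root {R A : Type*} [CommRing R] [Ring A] [Algebra R A] (f : R[X])
    (x : A) (hx : aeval x f = 0) : liftOfAeval f x hx (root f) = x := by
  rw [← mk_X]
  exact aeval_X x

theorem AdjoinRoot.natCard_eq_pow_natDegree {K : Type*} [Field K] {q : K[X]} (hq : q.Monic) :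
    Nat.card (AdjoinRoot q) = Nat.card K ^ q.natDegree := by
  have := hq.finite_adjoinRoot
  rw [Module.natCard_eq_pow_finrank (K := K), (powerBasis' hq).finrank, powerBasis'_dim]

theorem PowerBasis.exists_eq_algebraMap_add_smul_gen {R S : Type*} [CommRing R] [Ring S]
    [Algebra R S] [Nontrivial S] (pb : PowerBasis R S) (hdim : pb.dim = 2) (y : S) :
    ∃ a b : R, y = algebraMap R S a + b • pb.gen := by
  obtain ⟨f, hf, rfl⟩ := pb.exists_eq_aeval y
  obtain ⟨b, a, rfl⟩ := exists_eq_X_add_C_of_natDegree_le_one (p := f) (by omega)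
  exact ⟨a, b, by simp [Algebra.smul_def, add_comm]⟩

theorem aeval_X_pow_two_sub_C_neg {R : Type*} [CommRing R] (κ : R) :
    aeval !![0, -κ; 1, 0] (X ^ 2 - C (-κ)) = 0 := by
  ext i j
  fin_cases i <;> fin_cases j <;> simp [sq, Matrix.algebraMap_eq_diagonal]

section ScalarUnits

variable (F L : Type*) [Field F] [CommRing L] [Algebra F L]

abbrev scalarUnits : Subgroup Lˣ := (Units.map (algebraMap F L).toMonoidHom).range

variable {F L}

theorem exists_mk_eq_algebraMap_add_gen [Nontrivial L] (pb : PowerBasis F L) (hdim : pb.dim = 2)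
    (x : Lˣ ⧸ scalarUnits F L) (hx : x ≠ 1) :
    ∃ (n : F) (w : Lˣ), (w : L) = algebraMap F L n + pb.gen ∧ (w : Lˣ ⧸ scalarUnits F L) = x := by
  obtain ⟨u, rfl⟩ := QuotientGroup.mk_surjective x
  obtain ⟨a, b, hab⟩ := pb.exists_eq_algebraMap_add_smul_gen hdim u
  have hb : b ≠ 0 := by
    rintro rfl
    refine hx ((QuotientGroup.eq_one_iff u).2 ⟨Units.mk0 a fun ha => u.ne_zero ?_, ?_⟩)
    · simp [hab, ha]
    · ext; simp [hab]
  let c : Lˣ := Units.map (algebraMap F L).toMonoidHom (Units.mk0 b hb)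
  refine ⟨b⁻¹ * a, c⁻¹ * u, ?_, ?_⟩
  · simp [c, hab, Units.val_inv_eq_inv_val, Algebra.smul_def, mul_add, ← mul_assoc, ← map_mul,
      inv_mul_cancel₀ hb]
  · rw [QuotientGroup.eq, mul_inv_rev, inv_inv, mul_comm u⁻¹, inv_mul_cancel_right]
    exact ⟨Units.mk0 b hb, rfl⟩

theorem comap_units_map_center_eq_scalarUnits {n : Type*} [Fintype n] [DecidableEq n]
    (φ : L →ₐ[F] Matrix n n F) (hφ : Function.Injective φ) :
    (Subgroup.center (GL n F)).comap (Units.map (φ : L →* Matrix n n F)) = scalarUnits F L := by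
  have hscalar : Matrix.GeneralLinearGroup.scalar n =
      (Units.map (φ : L →* Matrix n n F)).comp (Units.map (algebraMap F L).toMonoidHom) := by
    ext; simp [Matrix.algebraMap_matrix_apply, Matrix.diagonal_apply]
  rw [Matrix.GeneralLinearGroup.center_eq_range_scalar, hscalar, MonoidHom.range_comp,
    Subgroup.comap_map_eq_self_of_injective (Units.map_injective (f := (φ : L →* Matrix n n F)) hφ)]

end ScalarUnits

theorem exists_orderOf_mk_scalarUnits_eq_add_one {F L : Type*} [Field F] [Finite F] [Field L]
    [Algebra F L] [Finite L] (hL : Nat.card L = Nat.card F ^ 2) :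
    ∃ u : Lˣ, orderOf (u : Lˣ ⧸ scalarUnits F L) = Nat.card F + 1 := by
  have : IsCyclic (Lˣ ⧸ scalarUnits F L) :=
    isCyclic_of_surjective _ (QuotientGroup.mk'_surjective _)
  obtain ⟨x, hx⟩ := IsCyclic.exists_ofOrder_eq_natCard (α := Lˣ ⧸ scalarUnits F L)
  obtain ⟨u, rfl⟩ := QuotientGroup.mk_surjective x
  refine ⟨u, ?_⟩
  have hsub : Nat.card (scalarUnits F L) = Nat.card F - 1 := by
    rw [← Nat.card_units]
    exact Nat.card_congr (MonoidHom.ofInjective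
      (Units.map_injective (algebraMap F L).injective)).toEquiv.symm
  have hlag := Subgroup.card_eq_card_quotient_mul_card_subgroup (scalarUnits F L)
  rw [Nat.card_units, hL, hsub, ← hx] at hlag
  have hF := Finite.one_lt_card (α := F)
  refine Nat.eq_of_mul_eq_mul_right (by omega : 0 < Nat.card F - 1) (hlag.symm.trans ?_)
  simpa using Nat.sq_sub_sq (Nat.card F) 1

theorem exists_matrix_order_p_add_one_general (p : ℕ) [Fact p.Prime]
    (κ : ZMod p) (hres : ¬ ∃ x : ZMod p, x ^ 2 = -κ) :
    ∃ (n : ZMod p) (M : (Matrix (Fin 2) (Fin 2) (ZMod p))ˣ),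
      (M : Matrix (Fin 2) (Fin 2) (ZMod p)) = !![n, -κ; 1, n] ∧
      orderOf (QuotientGroup.mk
        (s := Subgroup.center (Matrix (Fin 2) (Fin 2) (ZMod p))ˣ) M) = p + 1 := by
  set q : (ZMod p)[X] := X ^ 2 - C (-κ)
  have hq : q.Monic := monic_X_pow_sub_C _ two_ne_zero
  have : Fact (Irreducible q) :=
    ⟨X_pow_sub_C_irreducible_of_prime Nat.prime_two fun b hb => hres ⟨b, hb⟩⟩
  have : Module.Finite (ZMod p) (AdjoinRoot q) := hq.finite_adjoinRoot
  have : Finite (AdjoinRoot q) := Module.finite_of_finite (ZMod p)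
  obtain ⟨u, horder⟩ := exists_orderOf_mk_scalarUnits_eq_add_one (F := ZMod p)
    (L := AdjoinRoot q) (by rw [AdjoinRoot.natCard_eq_pow_natDegree hq, natDegree_X_pow_sub_C])
  rw [Nat.card_zmod] at horder
  let pb := AdjoinRoot.powerBasis' hq
  obtain ⟨n, w, hw, hwu⟩ := exists_mk_eq_algebraMap_add_gen pb natDegree_X_pow_sub_C u
    (fun h => by simp [h, (Fact.out : p.Prime).ne_zero] at horder)
  let φ := AdjoinRoot.liftOfAeval q _ (aeval_X_pow_two_sub_C_neg κ)
  refine ⟨n, Units.map (φ : AdjoinRoot q →* Matrix (Fin 2) (Fin 2) (ZMod p)) w, ?_, ?_⟩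
  · simp only [Units.coe_map, MonoidHom.coe_coe, hw, map_add, AlgHom.commutes,
      pb, AdjoinRoot.powerBasis'_gen, AdjoinRoot.liftOfAeval_root, φ]
    ext i j
    fin_cases i <;> fin_cases j <;> simp [Matrix.algebraMap_matrix_apply]
  · rw [QuotientGroup.orderOf_mk_eq_of_comap_eq _ (comap_units_map_center_eq_scalarUnits φ
      (φ : AdjoinRoot q →+* Matrix (Fin 2) (Fin 2) (ZMod p)).injective), hwu, horder]

/-- If -κ is not a quadratic residue mod p, some matrix M_n = [[n,-κ],[1,n]]
has order exactly p + 1 in PGL(2, 𝔽_p). -/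
theorem exists_matrix_order_p_add_one (p : ℕ) [Fact p.Prime] (hodd : Odd p)
    (κ : ZMod p) (hres : ¬ ∃ x : ZMod p, x ^ 2 = -κ) :
    ∃ (n : ZMod p) (M : (Matrix (Fin 2) (Fin 2) (ZMod p))ˣ),
      (M : Matrix (Fin 2) (Fin 2) (ZMod p)) = !![n, -κ; 1, n] ∧
      orderOf (QuotientGroup.mk
        (s := Subgroup.center (Matrix (Fin 2) (Fin 2) (ZMod p))ˣ) M) = p + 1 :=
  exists_matrix_order_p_add_one_general p κ hres
end
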